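/- arXiv:2307.02492 — 8 statements merged into one kernel-verified Lean document; each statement's English description precedes it below -/
import Mathlib

section
/- Let (X, 𝒜, μ) be a measure space and f, g zero-divisors in the ring of measurable functions. Then μ(Z(f) △ Z(g)) = 0 if and only if ann(f) = ann(g). -/
open MeasureTheory Set

lemma ann_transfer {X : Type*} [MeasurableSpace X] (μ : Measure X)
    (f g h : X → ℝ) (h1 : μ ({x | f x = 0} \ {x | g x = 0}) = 0)
    (h2 : μ {x | f x * h x ≠ 0} = 0) : μ {x | g x * h x ≠ 0} = 0 := by
  apply measure_mono_null (t := {x | f x * h x ≠ 0} ∪ ({x | f x = 0} \ {x | g x = 0}))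
  · intro x hx
    simp only [mem_setOf_eq, mul_ne_zero_iff] at hx
    by_cases hfx : f x = 0
    · exact Or.inr ⟨hfx, fun hc => hx.1 hc⟩
    · exact Or.inl (by simp [mem_setOf_eq, mul_ne_zero_iff]; exact ⟨hfx, hx.2⟩)
  · exact measure_union_null h2 h1

theorem symmDiff_null_iff_ann_eq {X : Type*} [MeasurableSpace X] (μ : Measure X)
    (f g : X → ℝ)
    (hf : Measurable f) (hf₁ : 0 < μ {x | f x = 0}) (hf₂ : 0 < μ {x | f x = 0}ᶜ)
    (hg : Measurable g) (hg₁ : 0 < μ {x | g x = 0}) (hg₂ : 0 < μ {x | g x = 0}ᶜ) :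
    μ (symmDiff {x | f x = 0} {x | g x = 0}) = 0 ↔
      {h : X → ℝ | Measurable h ∧ μ {x | f x * h x ≠ 0} = 0} =
        {h : X → ℝ | Measurable h ∧ μ {x | g x * h x ≠ 0} = 0} := by
  constructor
  · intro hnull
    rw [Set.symmDiff_def] at hnull
    have hfg : μ ({x | f x = 0} \ {x | g x = 0}) = 0 :=
      measure_mono_null subset_union_left hnull
    have hgf : μ ({x | g x = 0} \ {x | f x = 0}) = 0 :=
      measure_mono_null subset_union_right hnull
    ext h
    simp only [mem_setOf_eq]
    exact ⟨fun ⟨hm, h0⟩ => ⟨hm, ann_transfer μ f g h hfg h0⟩,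
      fun ⟨hm, h0⟩ => ⟨hm, ann_transfer μ g f h hgf h0⟩⟩
  · intro heq
    have key : ∀ f' g' : X → ℝ, Measurable f' →
        {h : X → ℝ | Measurable h ∧ μ {x | f' x * h x ≠ 0} = 0} ⊆
          {h : X → ℝ | Measurable h ∧ μ {x | g' x * h x ≠ 0} = 0} →
        μ ({x | f' x = 0} \ {x | g' x = 0}) = 0 := by
      intro f' g' hf' hsub
      set h₁ : X → ℝ := fun x => if f' x = 0 then 1 else 0 with hh₁
      have hm : Measurable h₁ :=
        Measurable.ite (hf' (measurableSet_singleton 0)) measurable_const measurable_const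
      have hmem : h₁ ∈ {h : X → ℝ | Measurable h ∧ μ {x | f' x * h x ≠ 0} = 0} := by
        refine ⟨hm, ?_⟩
        convert measure_empty (μ := μ)
        ext x
        simp only [mem_setOf_eq, hh₁, mem_empty_iff_false, iff_false, not_not]
        by_cases hx : f' x = 0 <;> simp [hx]
      have := hsub hmem
      refine measure_mono_null ?_ this.2
      rintro x ⟨hfx, hgx⟩
      simp only [mem_setOf_eq] at hfx hgx ⊢
      simp [hh₁, hfx]
      exact hgx
    rw [Set.symmDiff_def]
    exact measure_union_null (key f g hf heq.subset) (key g f hg heq.superset)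
end

section
/- Let (X, 𝒜, μ) be a measure space and f, g measurable functions. The sum of principal ideals ⟨f⟩ + ⟨g⟩ contains a μ-unit (a measurable function u with μ(Z(u)) = 0) and equals ⟨u⟩ for some μ-unit u if and only if μ(Z(f) ∩ Z(g)) = 0. -/
open MeasureTheory Set

/-- The ring of real-valued measurable functions on `X`, as a subring of `X → ℝ`. -/
def MFunc (X : Type*) [MeasurableSpace X] : Subring (X → ℝ) where
  carrier := {f | Measurable f}
  mul_mem' hf hg := hf.mul hg
  one_mem' := measurable_one
  add_mem' hf hg := hf.add hg
  zero_mem' := measurable_zero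
  neg_mem' hf := hf.neg

/-! The ideal `⟨f⟩ + ⟨g⟩` is always principal, generated by `f² + g²`: this function vanishes
exactly on `Z(f) ∩ Z(g)`, and `f = (f / (f² + g²)) (f² + g²)` with the convention `0⁻¹ = 0`,
which keeps the quotient measurable. Conversely every element `c f + d g` of `⟨f⟩ + ⟨g⟩`
vanishes on `Z(f) ∩ Z(g)`, so a generator with null zero set forces `μ(Z(f) ∩ Z(g)) = 0`. -/

namespace MFunc

variable {X : Type*} [MeasurableSpace X]

theorem mem_span_singleton_of_forall_eq_zero {u v : MFunc X}
    (h : ∀ x, (u : X → ℝ) x = 0 → (v : X → ℝ) x = 0) : v ∈ Ideal.span {u} := by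
  refine Ideal.mem_span_singleton'.mpr ⟨⟨fun x => (v : X → ℝ) x * ((u : X → ℝ) x)⁻¹,
    v.2.mul u.2.inv⟩, Subtype.ext (funext fun x => ?_)⟩
  change (v : X → ℝ) x * ((u : X → ℝ) x)⁻¹ * (u : X → ℝ) x = (v : X → ℝ) x
  by_cases hx : (u : X → ℝ) x = 0
  · simp [hx, h x hx]
  · field_simp

theorem eq_zero_of_mem_span_sup_span {f g v : MFunc X}
    (hv : v ∈ Ideal.span {f} ⊔ Ideal.span {g}) {x : X}
    (hf : (f : X → ℝ) x = 0) (hg : (g : X → ℝ) x = 0) : (v : X → ℝ) x = 0 := by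
  obtain ⟨_, ha, _, hb, rfl⟩ := Submodule.mem_sup.mp hv
  obtain ⟨c, rfl⟩ := Ideal.mem_span_singleton'.mp ha
  obtain ⟨d, rfl⟩ := Ideal.mem_span_singleton'.mp hb
  change (c : X → ℝ) x * (f : X → ℝ) x + (d : X → ℝ) x * (g : X → ℝ) x = 0
  simp [hf, hg]

theorem mul_self_add_mul_self_apply_eq_zero_iff (f g : MFunc X) (x : X) :
    ((f * f + g * g : MFunc X) : X → ℝ) x = 0 ↔ (f : X → ℝ) x = 0 ∧ (g : X → ℝ) x = 0 :=
  mul_self_add_mul_self_eq_zero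

theorem span_sup_span_eq_span_mul_self_add_mul_self (f g : MFunc X) :
    Ideal.span {f} ⊔ Ideal.span {g} = Ideal.span {f * f + g * g} := by
  apply le_antisymm
  · rw [sup_le_iff, Ideal.span_singleton_le_iff_mem, Ideal.span_singleton_le_iff_mem]
    have hzero := mul_self_add_mul_self_apply_eq_zero_iff f g
    exact ⟨mem_span_singleton_of_forall_eq_zero fun x hx => ((hzero x).mp hx).1,
      mem_span_singleton_of_forall_eq_zero fun x hx => ((hzero x).mp hx).2⟩
  · rw [Ideal.span_singleton_le_iff_mem]
    exact add_mem
      (Submodule.mem_sup_left (Ideal.mul_mem_left _ _ (Ideal.mem_span_singleton_self f)))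
      (Submodule.mem_sup_right (Ideal.mul_mem_left _ _ (Ideal.mem_span_singleton_self g)))

end MFunc

theorem span_sup_span_eq_span_unit_iff {X : Type*} [MeasurableSpace X]
    (μ : Measure X) (f g : MFunc X) :
    (∃ u : MFunc X, μ {x | (u : X → ℝ) x = 0} = 0 ∧
        Ideal.span {f} ⊔ Ideal.span {g} = Ideal.span {u}) ↔
      μ ({x | (f : X → ℝ) x = 0} ∩ {x | (g : X → ℝ) x = 0}) = 0 := by
  constructor
  · rintro ⟨u, hu, hspan⟩
    have hu_mem : u ∈ Ideal.span {f} ⊔ Ideal.span {g} :=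
      hspan ▸ Ideal.mem_span_singleton_self u
    exact measure_mono_null
      (fun x ⟨hf, hg⟩ => MFunc.eq_zero_of_mem_span_sup_span hu_mem hf hg) hu
  · intro h
    refine ⟨f * f + g * g, ?_, MFunc.span_sup_span_eq_span_mul_self_add_mul_self f g⟩
    simpa only [MFunc.mul_self_add_mul_self_apply_eq_zero_iff, ofPred_and] using h
end

section
/- Let (X, 𝒜, μ) be a measure space and f, g zero-divisors. There exists a zero-divisor h with μ(Z(f) ∩ Z(h)) = 0 and μ(Z(g) ∩ Z(h)) = 0 if and only if μ((X \ Z(f)) ∩ (X \ Z(g))) > 0. -/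
/-!
If `h` is a zero-divisor whose zero set meets `Z(f)` and `Z(g)` only in null sets, then `Z(h)`,
which has positive measure, is covered up to a null set by the common support of `f` and `g`.
Conversely, when that common support is non-null, the indicator of `Z(f) ∪ Z(g)` is such an `h`.
-/

open MeasureTheory Set

/-- `f` is a zero-divisor in the ring of measurable functions. -/
def IsZeroDiv {X : Type*} [MeasurableSpace X] (μ : Measure X) (f : X → ℝ) : Prop :=
  Measurable f ∧ 0 < μ {x | f x = 0} ∧ 0 < μ {x | f x = 0}ᶜ

theorem measure_eq_zero_of_inter_null_of_inter_null {X : Type*} [MeasurableSpace X]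
    {μ : Measure X} {A B S : Set X} (hA : μ (A ∩ S) = 0) (hB : μ (B ∩ S) = 0)
    (hAB : μ (Aᶜ ∩ Bᶜ) = 0) : μ S = 0 := by
  have hcover : S ⊆ (A ∩ S) ∪ (B ∩ S) ∪ (Aᶜ ∩ Bᶜ) := by
    intro x hx
    by_cases hxA : x ∈ A
    · exact Or.inl (Or.inl ⟨hxA, hx⟩)
    by_cases hxB : x ∈ B
    · exact Or.inl (Or.inr ⟨hxB, hx⟩)
    · exact Or.inr ⟨hxA, hxB⟩
  exact measure_mono_null hcover (measure_union_null (measure_union_null hA hB) hAB)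

theorem setOf_indicator_one_eq_zero {X : Type*} (s : Set X) :
    {x | s.indicator (1 : X → ℝ) x = 0} = sᶜ := by
  ext x
  simp [indicator_apply_eq_zero]

theorem isZeroDiv_indicator_one {X : Type*} [MeasurableSpace X] {μ : Measure X} {s : Set X}
    (hs : MeasurableSet s) (hs_pos : 0 < μ s) (hsc_pos : 0 < μ sᶜ) :
    IsZeroDiv μ (s.indicator 1) := by
  refine ⟨measurable_one.indicator hs, ?_, ?_⟩ <;> rw [setOf_indicator_one_eq_zero]
  · exact hsc_pos
  · rwa [compl_compl]

theorem common_neighbor_iff_general {X : Type*} [MeasurableSpace X] (μ : Measure X)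
    (f g : X → ℝ)
    (hf : IsZeroDiv μ f) (hg : IsZeroDiv μ g) :
    (∃ h : X → ℝ, IsZeroDiv μ h ∧ μ ({x | f x = 0} ∩ {x | h x = 0}) = 0 ∧
        μ ({x | g x = 0} ∩ {x | h x = 0}) = 0) ↔
      0 < μ ({x | f x = 0}ᶜ ∩ {x | g x = 0}ᶜ) := by
  set A := {x | f x = 0}
  set B := {x | g x = 0}
  constructor
  · rintro ⟨h, hh, hAh, hBh⟩
    by_contra! hAB
    exact hh.2.1.ne' <|
      measure_eq_zero_of_inter_null_of_inter_null hAh hBh (nonpos_iff_eq_zero.1 hAB)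
  · intro hAB
    have hA : MeasurableSet A := hf.1 (measurableSet_singleton 0)
    have hB : MeasurableSet B := hg.1 (measurableSet_singleton 0)
    refine ⟨(A ∪ B).indicator 1, isZeroDiv_indicator_one (hA.union hB)
      (hf.2.1.trans_le (measure_mono subset_union_left)) (by rwa [compl_union]), ?_, ?_⟩ <;>
      rw [setOf_indicator_one_eq_zero, compl_union]
    · simp [← inter_assoc]
    · simp [inter_left_comm B]

theorem common_neighbor_iff {X : Type*} [MeasurableSpace X] (μ : Measure X)
    (hμ : 0 < μ Set.univ) (f g : X → ℝ)
    (hf : IsZeroDiv μ f) (hg : IsZeroDiv μ g) :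
    (∃ h : X → ℝ, IsZeroDiv μ h ∧ μ ({x | f x = 0} ∩ {x | h x = 0}) = 0 ∧
        μ ({x | g x = 0} ∩ {x | h x = 0}) = 0) ↔
      0 < μ ({x | f x = 0}ᶜ ∩ {x | g x = 0}ᶜ) :=
  common_neighbor_iff_general μ f g hf hg
end

section
/- Let (X, 𝒜, μ) be a measure space, X not an atom, and f a zero-divisor. There exist zero-divisors g, h with μ(Z(f) ∩ Z(g)) = 0, μ(Z(g) ∩ Z(h)) = 0, and μ(Z(h) ∩ Z(f)) = 0 if and only if X \ Z(f) is not an atom. -/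
open MeasureTheory Set

def IsAtomSet {X : Type*} [MeasurableSpace X] (μ : Measure X) (A : Set X) : Prop :=
  MeasurableSet A ∧ 0 < μ A ∧
    ¬ ∃ B C : Set X, MeasurableSet B ∧ MeasurableSet C ∧ Disjoint B C ∧
      A = B ∪ C ∧ 0 < μ B ∧ 0 < μ C

lemma pos_diff_of_inter_null {X : Type*} [MeasurableSpace X] {μ : Measure X}
    {A N : Set X} (hA : 0 < μ A) (hN : μ (A ∩ N) = 0) : 0 < μ (A \ N) := by
  have h := measure_le_inter_add_diff μ A N
  rw [hN, zero_add] at h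
  exact lt_of_lt_of_le hA h

theorem triangle_iff_compl_not_atom {X : Type*} [MeasurableSpace X] (μ : Measure X)
    (hμ : 0 < μ Set.univ) (hX : ¬ IsAtomSet μ Set.univ)
    (f : X → ℝ) (hf : IsZeroDiv μ f) :
    (∃ g h : X → ℝ, IsZeroDiv μ g ∧ IsZeroDiv μ h ∧
        μ ({x | f x = 0} ∩ {x | g x = 0}) = 0 ∧
        μ ({x | g x = 0} ∩ {x | h x = 0}) = 0 ∧
        μ ({x | h x = 0} ∩ {x | f x = 0}) = 0) ↔
      ¬ IsAtomSet μ {x | f x = 0}ᶜ := by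
  obtain ⟨hfm, hZ, hZc⟩ := hf
  set Z := {x | f x = 0} with hZdef
  have hZm : MeasurableSet Z := hfm (measurableSet_singleton 0)
  constructor
  · rintro ⟨g, h, ⟨hgm, hg1, hg2⟩, ⟨hhm, hh1, hh2⟩, hfg, hgh, hhf⟩
    rintro ⟨hAm, hApos, hcon⟩
    apply hcon
    set G := {x | g x = 0} with hGdef
    set H := {x | h x = 0} with hHdef
    have hGm : MeasurableSet G := hgm (measurableSet_singleton 0)
    refine ⟨Zᶜ ∩ G, Zᶜ \ G, hZm.compl.inter hGm, hZm.compl.diff hGm,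
      disjoint_sdiff_self_right.mono_left inter_subset_right, (inter_union_diff _ _).symm,
      ?_, ?_⟩
    · have : 0 < μ (G \ Z) := pos_diff_of_inter_null hg1 (by rwa [inter_comm] at hfg)
      have hsub : G \ Z ⊆ Zᶜ ∩ G := fun x hx => ⟨hx.2, hx.1⟩
      exact lt_of_lt_of_le this (measure_mono hsub)
    · have hnull : μ (H ∩ (Z ∪ G)) = 0 := by
        have hle : μ (H ∩ (Z ∪ G)) ≤ μ (H ∩ Z) + μ (H ∩ G) := by
          rw [inter_union_distrib_left]
          exact measure_union_le _ _
        have h1 : μ (H ∩ Z) = 0 := hhf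
        have h2 : μ (H ∩ G) = 0 := by rwa [inter_comm] at hgh
        simpa [h1, h2] using hle
      have : 0 < μ (H \ (Z ∪ G)) := pos_diff_of_inter_null hh1 hnull
      have hsub : H \ (Z ∪ G) ⊆ Zᶜ \ G := fun x hx =>
        ⟨fun hxZ => hx.2 (Or.inl hxZ), fun hxG => hx.2 (Or.inr hxG)⟩
      exact lt_of_lt_of_le this (measure_mono hsub)
  · intro hnot
    classical
    unfold IsAtomSet at hnot
    push_neg at hnot
    obtain ⟨B, C, hBm, hCm, hBC, hUnion, hBpos, hCpos⟩ := hnot hZm.compl hZc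
    set g : X → ℝ := B.piecewise (fun _ => (0:ℝ)) (fun _ => 1) with hgdef
    set h : X → ℝ := C.piecewise (fun _ => (0:ℝ)) (fun _ => 1) with hhdef
    have hzB : {x | g x = 0} = B := by
      ext x; by_cases hx : x ∈ B <;> simp [hgdef, Set.piecewise, hx]
    have hzC : {x | h x = 0} = C := by
      ext x; by_cases hx : x ∈ C <;> simp [hhdef, Set.piecewise, hx]
    have hBZ : B ⊆ Zᶜ := hUnion ▸ subset_union_left
    have hCZ : C ⊆ Zᶜ := hUnion ▸ subset_union_right
    have hCB : C ⊆ Bᶜ := fun x hx hxB => (disjoint_left.mp hBC hxB) hx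
    have hBCc : B ⊆ Cᶜ := fun x hx hxC => (disjoint_left.mp hBC hx) hxC
    have e1 : Z ∩ B = ∅ := by
      ext x; simp only [mem_inter_iff, mem_empty_iff_false, iff_false, not_and]
      intro h1 h2; exact hBZ h2 h1
    have e2 : B ∩ C = ∅ := by
      ext x; simp only [mem_inter_iff, mem_empty_iff_false, iff_false, not_and]
      intro h1 h2; exact hBCc h1 h2
    have e3 : C ∩ Z = ∅ := by
      ext x; simp only [mem_inter_iff, mem_empty_iff_false, iff_false, not_and]
      intro h1 h2; exact hCZ h1 h2
    refine ⟨g, h,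
      ⟨Measurable.piecewise hBm measurable_const measurable_const, ?_, ?_⟩,
      ⟨Measurable.piecewise hCm measurable_const measurable_const, ?_, ?_⟩, ?_, ?_, ?_⟩
    · rw [hzB]; exact hBpos
    · rw [hzB]; exact lt_of_lt_of_le hCpos (measure_mono hCB)
    · rw [hzC]; exact hCpos
    · rw [hzC]; exact lt_of_lt_of_le hBpos (measure_mono hBCc)
    · rw [hzB, e1, measure_empty]
    · rw [hzB, hzC, e2, measure_empty]
    · rw [hzC, e3, measure_empty]
end

section
/- Let (X, 𝒜, μ) be a measure space and f, g zero-divisors. Then ann(f) ∪ ann(g) ⊊ ann(f·g) if and only if μ(Z(f) \ Z(g)) > 0 and μ(Z(g) \ Z(f)) > 0. -/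
open MeasureTheory Set

theorem annihilator_graph_adjacency {X : Type*} [MeasurableSpace X] (μ : Measure X)
    (f g : X → ℝ) (hf : IsZeroDiv μ f) (hg : IsZeroDiv μ g) :
    ({h : X → ℝ | Measurable h ∧ μ {x | f x * h x ≠ 0} = 0} ∪
        {h : X → ℝ | Measurable h ∧ μ {x | g x * h x ≠ 0} = 0}) ⊂
      {h : X → ℝ | Measurable h ∧ μ {x | (f x * g x) * h x ≠ 0} = 0} ↔
      0 < μ ({x | f x = 0} \ {x | g x = 0}) ∧ 0 < μ ({x | g x = 0} \ {x | f x = 0}) := by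
  obtain ⟨hfm, hfz, hfc⟩ := hf
  obtain ⟨hgm, hgz, hgc⟩ := hg
  have hsub : ({h : X → ℝ | Measurable h ∧ μ {x | f x * h x ≠ 0} = 0} ∪
      {h : X → ℝ | Measurable h ∧ μ {x | g x * h x ≠ 0} = 0}) ⊆
      {h : X → ℝ | Measurable h ∧ μ {x | (f x * g x) * h x ≠ 0} = 0} := by
    rintro h (⟨hm, h0⟩ | ⟨hm, h0⟩)
    · refine ⟨hm, measure_mono_null ?_ h0⟩
      intro x hx
      simp only [mem_setOf_eq] at hx ⊢
      intro hc
      exact hx (by rw [show f x * g x * h x = g x * (f x * h x) by ring, hc, mul_zero])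
    · refine ⟨hm, measure_mono_null ?_ h0⟩
      intro x hx
      simp only [mem_setOf_eq] at hx ⊢
      intro hc
      exact hx (by rw [show f x * g x * h x = f x * (g x * h x) by ring, hc, mul_zero])
  rw [Set.ssubset_iff_of_subset hsub]
  constructor
  · rintro ⟨h, ⟨hm, h0⟩, hnot⟩
    simp only [Set.mem_union, Set.mem_setOf_eq, not_or, not_and] at hnot
    have hfp : μ {x | f x * h x ≠ 0} ≠ 0 := hnot.1 hm
    have hgp : μ {x | g x * h x ≠ 0} ≠ 0 := hnot.2 hm
    constructor
    · -- {f x = 0} \ {g x = 0} covers {g x * h x ≠ 0} up to null set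
      rw [pos_iff_ne_zero]
      intro hz
      apply hgp
      apply measure_mono_null (?_ : _ ⊆ {x | (f x * g x) * h x ≠ 0} ∪
        ({x | f x = 0} \ {x | g x = 0}))
      · exact measure_union_null h0 hz
      · intro x hx
        simp only [mem_setOf_eq] at hx
        by_cases hfx : f x = 0
        · right
          refine ⟨hfx, fun hgx => hx ?_⟩
          rw [hgx, zero_mul]
        · left
          simp only [mem_setOf_eq]
          intro hc
          apply hx
          have := mul_eq_zero.mp hc
          rcases this with h1 | h1
          · rcases mul_eq_zero.mp h1 with h2 | h2
            · exact absurd h2 hfx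
            · rw [h2, zero_mul]
          · rw [h1, mul_zero]
    · rw [pos_iff_ne_zero]
      intro hz
      apply hfp
      apply measure_mono_null (?_ : _ ⊆ {x | (f x * g x) * h x ≠ 0} ∪
        ({x | g x = 0} \ {x | f x = 0}))
      · exact measure_union_null h0 hz
      · intro x hx
        simp only [mem_setOf_eq] at hx
        by_cases hgx : g x = 0
        · right
          refine ⟨hgx, fun hfx => hx ?_⟩
          rw [hfx, zero_mul]
        · left
          simp only [mem_setOf_eq]
          intro hc
          apply hx
          rcases mul_eq_zero.mp hc with h1 | h1
          · rcases mul_eq_zero.mp h1 with h2 | h2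
            · rw [h2, zero_mul]
            · exact absurd h2 hgx
          · rw [h1, mul_zero]
  · rintro ⟨h1, h2⟩
    refine ⟨({x | f x = 0} ∪ {x | g x = 0}).indicator 1, ⟨?_, ?_⟩, ?_⟩
    · exact (measurable_one.indicator
        ((hfm (measurableSet_singleton 0)).union (hgm (measurableSet_singleton 0))))
    · refine measure_mono_null (fun x hx => hx ?_) measure_empty
      by_cases hx : x ∈ ({x | f x = 0} ∪ {x | g x = 0})
      · rcases hx with hx | hx
        · rw [Set.mem_setOf_eq] at hx; rw [hx, zero_mul, zero_mul]
        · rw [Set.mem_setOf_eq] at hx; rw [hx, mul_zero, zero_mul]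
      · rw [Set.indicator_of_notMem hx, mul_zero]
    · simp only [Set.mem_union, Set.mem_setOf_eq, not_or, not_and]
      constructor
      · intro _ hz
        rw [pos_iff_ne_zero] at h2
        apply h2
        apply measure_mono_null ?_ hz
        intro x ⟨hgx, hfx⟩
        simp only [mem_setOf_eq]
        rw [Set.indicator_of_mem (Set.mem_union_right _ hgx)]
        simpa using hfx
      · intro _ hz
        rw [pos_iff_ne_zero] at h1
        apply h1
        apply measure_mono_null ?_ hz
        intro x ⟨hfx, hgx⟩
        simp only [mem_setOf_eq]
        rw [Set.indicator_of_mem (Set.mem_union_left _ hfx)]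
        simpa using hgx
end

section
/- Let (X, 𝒜, μ) be a measure space and f, g zero-divisors with μ((X\Z(f)) ∩ (X\Z(g))) = 0 and μ(Z(f) ∩ Z(g)) = 0. Then there exists a zero-divisor h with μ(Z(f) \ Z(h)) > 0, μ(Z(h) \ Z(f)) > 0, μ(Z(g) \ Z(h)) > 0, μ(Z(h) \ Z(g)) > 0 if and only if neither Z(f) nor Z(g) is an atom. -/
open MeasureTheory Set

private lemma pos_of_subset_union {X : Type*} [MeasurableSpace X] {μ : Measure X}
    {a b c : Set X} (hsub : a ⊆ b ∪ c) (hc : μ c = 0) (ha : 0 < μ a) : 0 < μ b := by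
  have h1 : μ a ≤ μ b + μ c := le_trans (measure_mono hsub) (measure_union_le b c)
  rw [hc, add_zero] at h1
  exact lt_of_lt_of_le ha h1

private lemma pos_diff_of_null_inter {X : Type*} [MeasurableSpace X] {μ : Measure X}
    {s t : Set X} (h0 : μ (s ∩ t) = 0) (hs : 0 < μ s) : 0 < μ (s \ t) := by
  have : s ⊆ (s \ t) ∪ (s ∩ t) := by
    intro x hx
    by_cases hxt : x ∈ t
    · exact Or.inr ⟨hx, hxt⟩
    · exact Or.inl ⟨hx, hxt⟩
  exact pos_of_subset_union this h0 hs

theorem common_AG_neighbor_iff_not_atoms {X : Type*} [MeasurableSpace X]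
    (μ : Measure X) (f g : X → ℝ) (hf : IsZeroDiv μ f) (hg : IsZeroDiv μ g)
    (h₁ : μ ({x | f x = 0}ᶜ ∩ {x | g x = 0}ᶜ) = 0)
    (h₂ : μ ({x | f x = 0} ∩ {x | g x = 0}) = 0) :
    (∃ h : X → ℝ, IsZeroDiv μ h ∧
        0 < μ ({x | f x = 0} \ {x | h x = 0}) ∧
        0 < μ ({x | h x = 0} \ {x | f x = 0}) ∧
        0 < μ ({x | g x = 0} \ {x | h x = 0}) ∧
        0 < μ ({x | h x = 0} \ {x | g x = 0})) ↔
      ¬ IsAtomSet μ {x | f x = 0} ∧ ¬ IsAtomSet μ {x | g x = 0} := by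
  set Zf := {x | f x = 0} with hZf
  set Zg := {x | g x = 0} with hZg
  have mZf : MeasurableSet Zf := hf.1 (measurableSet_singleton 0)
  have mZg : MeasurableSet Zg := hg.1 (measurableSet_singleton 0)
  constructor
  · rintro ⟨h, hzd, p1, p2, p3, p4⟩
    set Zh := {x | h x = 0} with hZh
    have mZh : MeasurableSet Zh := hzd.1 (measurableSet_singleton 0)
    constructor
    · rintro ⟨-, -, hno⟩
      apply hno
      refine ⟨Zf ∩ Zh, Zf \ Zh, mZf.inter mZh, mZf.diff mZh, ?_, ?_, ?_, p1⟩
      · exact disjoint_sdiff_right.mono_left inter_subset_right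
      · exact (inter_union_diff Zf Zh).symm
      · -- 0 < μ (Zf ∩ Zh) since Zh \ Zg ⊆ (Zf ∩ Zh) ∪ (Zfᶜ ∩ Zgᶜ)
        apply pos_of_subset_union (c := Zfᶜ ∩ Zgᶜ) ?_ h₁ p4
        intro x hx
        by_cases hxf : x ∈ Zf
        · exact Or.inl ⟨hxf, hx.1⟩
        · exact Or.inr ⟨hxf, hx.2⟩
    · rintro ⟨-, -, hno⟩
      apply hno
      refine ⟨Zg ∩ Zh, Zg \ Zh, mZg.inter mZh, mZg.diff mZh, ?_, ?_, ?_, p3⟩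
      · exact disjoint_sdiff_right.mono_left inter_subset_right
      · exact (inter_union_diff Zg Zh).symm
      · apply pos_of_subset_union (c := Zfᶜ ∩ Zgᶜ) ?_ h₁ p2
        intro x hx
        by_cases hxg : x ∈ Zg
        · exact Or.inl ⟨hxg, hx.1⟩
        · exact Or.inr ⟨hx.2, hxg⟩
  · rintro ⟨haf, hag⟩
    have hfsplit : ∃ B C : Set X, MeasurableSet B ∧ MeasurableSet C ∧ Disjoint B C ∧
        Zf = B ∪ C ∧ 0 < μ B ∧ 0 < μ C := by
      by_contra hno
      exact haf ⟨mZf, hf.2.1, hno⟩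
    have hgsplit : ∃ B C : Set X, MeasurableSet B ∧ MeasurableSet C ∧ Disjoint B C ∧
        Zg = B ∪ C ∧ 0 < μ B ∧ 0 < μ C := by
      by_contra hno
      exact hag ⟨mZg, hg.2.1, hno⟩
    obtain ⟨B, C, mB, mC, hBC, hU, hμB, hμC⟩ := hfsplit
    obtain ⟨B', C', mB', mC', hBC', hU', hμB', hμC'⟩ := hgsplit
    have hBf : B ⊆ Zf := hU ▸ subset_union_left
    have hCf : C ⊆ Zf := hU ▸ subset_union_right
    have hBg : B' ⊆ Zg := hU' ▸ subset_union_left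
    have hCg : C' ⊆ Zg := hU' ▸ subset_union_right
    set D := B ∪ B' with hD
    have mD : MeasurableSet D := mB.union mB'
    have hzero : {x | Dᶜ.indicator (fun _ => (1:ℝ)) x = 0} = D := by
      ext x
      by_cases hx : x ∈ D <;> simp [Set.indicator_apply, hx]
    have hCB' : 0 < μ (C \ B') :=
      pos_diff_of_null_inter
        (measure_mono_null (inter_subset_inter hCf hBg) h₂) hμC
    have hC'B : 0 < μ (C' \ B) :=
      pos_diff_of_null_inter
        (measure_mono_null (fun x hx => (⟨hBf hx.2, hCg hx.1⟩ : x ∈ Zf ∩ Zg)) h₂) hμC'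
    have hB'f : 0 < μ (B' \ Zf) :=
      pos_diff_of_null_inter
        (measure_mono_null (fun x hx => (⟨hx.2, hBg hx.1⟩ : x ∈ Zf ∩ Zg)) h₂) hμB'
    have hBZg : 0 < μ (B \ Zg) :=
      pos_diff_of_null_inter
        (measure_mono_null (fun x hx => (⟨hBf hx.1, hx.2⟩ : x ∈ Zf ∩ Zg)) h₂) hμB
    refine ⟨Dᶜ.indicator fun _ => (1:ℝ), ?_, ?_, ?_, ?_, ?_⟩
    · refine ⟨measurable_const.indicator mD.compl, ?_, ?_⟩
      · rw [hzero]
        exact lt_of_lt_of_le hμB (measure_mono subset_union_left)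
      · rw [hzero]
        refine lt_of_lt_of_le hCB' (measure_mono ?_)
        rintro x ⟨hxC, hxnB'⟩ (hxB | hxB')
        · exact disjoint_right.mp hBC hxC hxB
        · exact hxnB' hxB'
    · rw [hzero]
      refine lt_of_lt_of_le hCB' (measure_mono ?_)
      rintro x ⟨hxC, hxB'⟩
      refine ⟨hCf hxC, ?_⟩
      rintro (hxB | hB')
      · exact disjoint_right.mp hBC hxC hxB
      · exact hxB' hB'
    · rw [hzero]
      refine lt_of_lt_of_le hB'f (measure_mono ?_)
      rintro x ⟨hxB', hxf⟩
      exact ⟨Or.inr hxB', hxf⟩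
    · rw [hzero]
      refine lt_of_lt_of_le hC'B (measure_mono ?_)
      rintro x ⟨hxC', hxB⟩
      refine ⟨hCg hxC', ?_⟩
      rintro (hB | hxB')
      · exact hxB hB
      · exact disjoint_right.mp hBC' hxC' hxB'
    · rw [hzero]
      refine lt_of_lt_of_le hBZg (measure_mono ?_)
      rintro x ⟨hxB, hxg⟩
      exact ⟨Or.inl hxB, hxg⟩
end

section
/- Let (X, 𝒜, μ) be a measure space in which X is the disjoint union of three atoms. Then for every zero-divisor f, either Z(f) or X \ Z(f) is an atom. -/
open MeasureTheory Set

lemma atom_split {X : Type*} [MeasurableSpace X] {μ : Measure X} {A S : Set X}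
    (hA : IsAtomSet μ A) (hS : MeasurableSet S) :
    μ (A ∩ S) = 0 ∨ μ (A ∩ Sᶜ) = 0 := by
  by_contra h
  push_neg at h
  exact hA.2.2 ⟨A ∩ S, A ∩ Sᶜ, hA.1.inter hS, hA.1.inter hS.compl,
    Disjoint.mono inter_subset_right inter_subset_right disjoint_compl_right,
    (Set.inter_union_compl A S).symm,
    pos_iff_ne_zero.mpr h.1, pos_iff_ne_zero.mpr h.2⟩

lemma atom_congr {X : Type*} [MeasurableSpace X] {μ : Measure X} {A S : Set X}
    (hA : IsAtomSet μ A) (hS : MeasurableSet S)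
    (h1 : μ (A \ S) = 0) (h2 : μ (S \ A) = 0) : IsAtomSet μ S := by
  have hAS : μ A ≤ μ (A ∩ S) := by
    calc μ A ≤ μ (A ∩ S) + μ (A \ S) := measure_le_inter_add_diff μ A S
    _ = μ (A ∩ S) := by rw [h1, add_zero]
  have hSpos : 0 < μ S := lt_of_lt_of_le (lt_of_lt_of_le hA.2.1 hAS)
    (measure_mono inter_subset_right)
  refine ⟨hS, hSpos, ?_⟩
  rintro ⟨D, E, hD, hE, hDE, hSDE, hDpos, hEpos⟩
  refine hA.2.2 ⟨A ∩ D, (A ∩ E) ∪ (A \ S), hA.1.inter hD, (hA.1.inter hE).union (hA.1.diff hS),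
    ?_, ?_, ?_, ?_⟩
  · refine Disjoint.union_right (Disjoint.mono inter_subset_right inter_subset_right hDE) ?_
    refine Set.disjoint_left.mpr fun x hx hx' => hx'.2 ?_
    rw [hSDE]; exact Or.inl hx.2
  · ext x
    constructor
    · intro hx
      by_cases hxS : x ∈ S
      · rw [hSDE] at hxS
        rcases hxS with h | h
        · exact Or.inl ⟨hx, h⟩
        · exact Or.inr (Or.inl ⟨hx, h⟩)
      · exact Or.inr (Or.inr ⟨hx, hxS⟩)
    · rintro (h | h | h) <;> [exact h.1; exact h.1; exact h.1]
  · have : μ D ≤ μ (A ∩ D) := by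
      calc μ D ≤ μ (D ∩ A) + μ (D \ A) := measure_le_inter_add_diff μ D A
      _ ≤ μ (A ∩ D) + μ (S \ A) := add_le_add (le_of_eq (by rw [Set.inter_comm]))
          (measure_mono fun x hx => ⟨by rw [hSDE]; exact Or.inl hx.1, hx.2⟩)
      _ = μ (A ∩ D) := by rw [h2, add_zero]
    exact lt_of_lt_of_le hDpos this
  · have : μ E ≤ μ (A ∩ E) := by
      calc μ E ≤ μ (E ∩ A) + μ (E \ A) := measure_le_inter_add_diff μ E A
      _ ≤ μ (A ∩ E) + μ (S \ A) := add_le_add (le_of_eq (by rw [Set.inter_comm]))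
          (measure_mono fun x hx => ⟨by rw [hSDE]; exact Or.inr hx.1, hx.2⟩)
      _ = μ (A ∩ E) := by rw [h2, add_zero]
    exact lt_of_lt_of_le (lt_of_lt_of_le hEpos this)
      (measure_mono (subset_union_left.trans (by rfl)))

lemma atom_key {X : Type*} [MeasurableSpace X] {μ : Measure X} {A B C Z : Set X}
    (hA : IsAtomSet μ A) (hZ : MeasurableSet Z)
    (hcov : ∀ x, x ∈ A ∨ x ∈ B ∨ x ∈ C)
    (h1 : μ (A ∩ Zᶜ) = 0) (h2 : μ (B ∩ Z) = 0) (h3 : μ (C ∩ Z) = 0) :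
    IsAtomSet μ Z := by
  refine atom_congr hA hZ (by rwa [Set.diff_eq]) ?_
  refine measure_mono_null (fun x hx => ?_) (measure_union_null h2 h3)
  rcases hcov x with h | h | h
  · exact absurd h hx.2
  · exact Or.inl ⟨h, hx.1⟩
  · exact Or.inr ⟨h, hx.1⟩

theorem three_atom_partition_zero_set {X : Type*} [MeasurableSpace X]
    (μ : Measure X) (A B C : Set X)
    (hA : IsAtomSet μ A) (hB : IsAtomSet μ B) (hC : IsAtomSet μ C)
    (hAB : Disjoint A B) (hAC : Disjoint A C) (hBC : Disjoint B C)
    (hcover : A ∪ B ∪ C = Set.univ)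
    (f : X → ℝ) (hf : IsZeroDiv μ f) :
    IsAtomSet μ {x | f x = 0} ∨ IsAtomSet μ {x | f x = 0}ᶜ := by
  set Z := {x | f x = 0} with hZdef
  have hZ : MeasurableSet Z := hf.1 (measurableSet_singleton 0)
  have hcov : ∀ x, x ∈ A ∨ x ∈ B ∨ x ∈ C := by
    intro x
    have : x ∈ A ∪ B ∪ C := hcover ▸ Set.mem_univ x
    rcases this with (h | h) | h
    · exact Or.inl h
    · exact Or.inr (Or.inl h)
    · exact Or.inr (Or.inr h)
  have hZpos := hf.2.1
  have hZcpos := hf.2.2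
  have notall : ∀ {S : Set X}, 0 < μ S → ¬ (μ (A ∩ S) = 0 ∧ μ (B ∩ S) = 0 ∧ μ (C ∩ S) = 0) := by
    rintro S hS ⟨h1, h2, h3⟩
    have : μ S = 0 := by
      refine measure_mono_null (fun x hx => ?_) (measure_union_null h1 (measure_union_null h2 h3))
      rcases hcov x with h | h | h
      · exact Or.inl ⟨h, hx⟩
      · exact Or.inr (Or.inl ⟨h, hx⟩)
      · exact Or.inr (Or.inr ⟨h, hx⟩)
    exact absurd this hS.ne'
  have hcc : Zᶜᶜ = Z := compl_compl Z
  rcases atom_split hA hZ with hA0 | hA0 <;>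
    rcases atom_split hB hZ with hB0 | hB0 <;>
      rcases atom_split hC hZ with hC0 | hC0
  · exact absurd ⟨hA0, hB0, hC0⟩ (notall hZpos)
  · -- A,B in Zᶜ, C in Z
    exact Or.inl (atom_key hC hZ (fun x => (hcov x).elim (Or.inr ∘ Or.inl)
      (fun h => h.elim (Or.inr ∘ Or.inr) Or.inl)) hC0 hA0 hB0)
  · exact Or.inl (atom_key hB hZ (fun x => (hcov x).elim (Or.inr ∘ Or.inl)
      (fun h => h.elim Or.inl (Or.inr ∘ Or.inr))) hB0 hA0 hC0)
  · exact Or.inr (atom_key hA hZ.compl hcov (by rwa [hcc]) hB0 hC0)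
  · exact Or.inl (atom_key hA hZ hcov hA0 hB0 hC0)
  · exact Or.inr (atom_key hB hZ.compl (fun x => (hcov x).elim (Or.inr ∘ Or.inl)
      (fun h => h.elim Or.inl (Or.inr ∘ Or.inr))) (by rwa [hcc]) hA0 hC0)
  · exact Or.inr (atom_key hC hZ.compl (fun x => (hcov x).elim (Or.inr ∘ Or.inl)
      (fun h => h.elim (Or.inr ∘ Or.inr) Or.inl)) (by rwa [hcc]) hA0 hB0)
  · exact absurd ⟨hA0, hB0, hC0⟩ (notall hZcpos)
end

section
/- Let (X, 𝒜, μ) be a measure space, X containing an atom A with μ(X \ A) > 0, and suppose X is not partitioned into two atoms nor into three atoms. Then there exists a zero-divisor f such that neither Z(f) nor X \ Z(f) is an atom. -/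
open MeasureTheory Set

lemma aux_zero_div {X : Type*} [MeasurableSpace X] (μ : Measure X)
    (A B C : Set X) (hAm : MeasurableSet A) (hApos : 0 < μ A)
    (hBm : MeasurableSet B) (hBpos : 0 < μ B) (hCpos : 0 < μ C)
    (hAB : Disjoint A B) (hU : Aᶜ = B ∪ C) (hBC : Disjoint B C)
    (hCnot : ¬ IsAtomSet μ C) :
    ∃ f : X → ℝ, IsZeroDiv μ f ∧
      ¬ IsAtomSet μ {x | f x = 0} ∧ ¬ IsAtomSet μ {x | f x = 0}ᶜ := by
  classical
  set S := A ∪ B with hS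
  have hSm : MeasurableSet S := hAm.union hBm
  have hCsub : C ⊆ Bᶜ := fun x hx => Set.disjoint_right.mp hBC hx
  have hSc : Sᶜ = C := by
    rw [hS, Set.compl_union, hU, Set.union_inter_distrib_right, Set.inter_compl_self,
      Set.empty_union, Set.inter_eq_left.mpr hCsub]
  refine ⟨fun x => if x ∈ S then 0 else 1, ?_, ?_, ?_⟩
  · refine ⟨measurable_const.ite hSm measurable_const, ?_, ?_⟩
    · have hZ : {x | (if x ∈ S then (0:ℝ) else 1) = 0} = S := by
        ext x; by_cases hx : x ∈ S <;> simp [hx]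
      rw [hZ]
      exact lt_of_lt_of_le hApos (measure_mono Set.subset_union_left)
    · have hZ : {x | (if x ∈ S then (0:ℝ) else 1) = 0} = S := by
        ext x; by_cases hx : x ∈ S <;> simp [hx]
      rw [hZ, hSc]; exact hCpos
  · have hZ : {x | (if x ∈ S then (0:ℝ) else 1) = 0} = S := by
      ext x; by_cases hx : x ∈ S <;> simp [hx]
    rw [hZ]
    rintro ⟨_, _, hno⟩
    exact hno ⟨A, B, hAm, hBm, hAB, rfl, hApos, hBpos⟩
  · have hZ : {x | (if x ∈ S then (0:ℝ) else 1) = 0} = S := by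
      ext x; by_cases hx : x ∈ S <;> simp [hx]
    rw [hZ, hSc]; exact hCnot

theorem exists_zero_div_no_orthogonal_complement {X : Type*} [MeasurableSpace X]
    (μ : Measure X) (hμ : 0 < μ Set.univ) (hX : ¬ IsAtomSet μ Set.univ)
    (A : Set X) (hA : IsAtomSet μ A) (hAc : 0 < μ Aᶜ)
    (h2 : ¬ ∃ B C : Set X, IsAtomSet μ B ∧ IsAtomSet μ C ∧ Disjoint B C ∧
      B ∪ C = Set.univ)
    (h3 : ¬ ∃ B C D : Set X, IsAtomSet μ B ∧ IsAtomSet μ C ∧ IsAtomSet μ D ∧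
      Disjoint B C ∧ Disjoint B D ∧ Disjoint C D ∧ B ∪ C ∪ D = Set.univ) :
    ∃ f : X → ℝ, IsZeroDiv μ f ∧
      ¬ IsAtomSet μ {x | f x = 0} ∧ ¬ IsAtomSet μ {x | f x = 0}ᶜ := by
  obtain ⟨hAm, hApos, hAatom⟩ := hA
  have hAc_not : ¬ IsAtomSet μ Aᶜ := fun h =>
    h2 ⟨A, Aᶜ, ⟨hAm, hApos, hAatom⟩, h, disjoint_compl_right, Set.union_compl_self A⟩
  have hsplit : ∃ B C : Set X, MeasurableSet B ∧ MeasurableSet C ∧ Disjoint B C ∧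
      Aᶜ = B ∪ C ∧ 0 < μ B ∧ 0 < μ C := by
    by_contra h
    exact hAc_not ⟨hAm.compl, hAc, h⟩
  obtain ⟨B, C, hBm, hCm, hBC, hU, hBpos, hCpos⟩ := hsplit
  have hBsub : B ⊆ Aᶜ := by rw [hU]; exact Set.subset_union_left
  have hCsub : C ⊆ Aᶜ := by rw [hU]; exact Set.subset_union_right
  have hABd : Disjoint A B := Set.disjoint_of_subset_right hBsub disjoint_compl_right
  have hACd : Disjoint A C := Set.disjoint_of_subset_right hCsub disjoint_compl_right
  by_cases hC : IsAtomSet μ C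
  · by_cases hB : IsAtomSet μ B
    · exact absurd ⟨A, B, C, ⟨hAm, hApos, hAatom⟩, hB, hC, hABd, hACd, hBC,
        by rw [Set.union_assoc, ← hU, Set.union_compl_self]⟩ h3
    · exact aux_zero_div μ A C B hAm hApos hCm hCpos hBpos hACd
        (by rw [hU, Set.union_comm]) hBC.symm hB
  · exact aux_zero_div μ A B C hAm hApos hBm hBpos hCpos hABd hU hBC hC
end
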